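/- Andréief's identity: for functions f_1,...,f_n and g_1,...,g_n integrable on a measure space (C, μ), ∫⋯∫ det(f_i(ζ_j)) · det(g_i(ζ_j)) dμ(ζ_1)⋯dμ(ζ_n) = n! · det(∫ f_i(ζ) g_j(ζ) dμ(ζ))_{1≤i,j≤n}. -/

import Mathlib

/-!
Expanding both determinants by the Leibniz formula writes the integrand as a signed double sum,
over pairs of permutations `(σ, τ)`, of products `∏ⱼ f_{σ j}(ζ_j) g_{τ j}(ζ_j)` that split over
the coordinates; Fubini turns each integral into `∏ⱼ M_{σ j, τ j}` with `M_{ij} = ∫ f_i g_j dμ`.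
For fixed `τ`, the sum over `σ` is `sign τ · det M` with columns permuted by `τ`, that is `det M`,
and the `n!` choices of `τ` give the factor `n!`.
-/

open MeasureTheory Finset Equiv

namespace Matrix

variable {n R : Type*} [Fintype n] [DecidableEq n] [CommRing R]

theorem det_mul_det_eq_sum_sum_sign_mul_prod (A B : Matrix n n R) :
    A.det * B.det = ∑ σ : Perm n, ∑ τ : Perm n,
      ((Perm.sign σ : ℤ) * (Perm.sign τ : ℤ) : R) * ∏ j, A (σ j) j * B (τ j) j := by
  rw [det_apply', det_apply', sum_mul_sum]
  refine sum_congr rfl fun σ _ => sum_congr rfl fun τ _ => ?_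
  rw [prod_mul_distrib]
  ring

theorem sum_sum_sign_mul_prod_eq_factorial_mul_det (M : Matrix n n R) :
    ∑ σ : Perm n, ∑ τ : Perm n,
      ((Perm.sign σ : ℤ) * (Perm.sign τ : ℤ) : R) * ∏ j, M (σ j) (τ j)
      = (Fintype.card n).factorial * M.det := by
  have sum_sign_mul_prod_eq_det (τ : Perm n) :
      ∑ σ : Perm n, ((Perm.sign σ : ℤ) * (Perm.sign τ : ℤ) : R) * ∏ j, M (σ j) (τ j) = M.det := by
    calc _ = (Perm.sign τ : ℤ) * (M.submatrix id τ).det := by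
          rw [det_apply', mul_sum]
          exact sum_congr rfl fun σ _ => by simp only [submatrix_apply, id]; ring
      _ = M.det := by
          rw [det_permute', ← mul_assoc, ← Int.cast_mul, ← Units.val_mul, Int.units_mul_self,
            Units.val_one, Int.cast_one, one_mul]
  rw [sum_comm]
  simp only [sum_sign_mul_prod_eq_det, sum_const, card_univ, Fintype.card_perm, nsmul_eq_mul]

end Matrix

theorem andreief_identity_general {C : Type*} [MeasurableSpace C] (μ : Measure C) [SigmaFinite μ]
    (n : ℕ) (f g : Fin n → C → ℂ)
    (hfg : ∀ i j, Integrable (fun ζ => f i ζ * g j ζ) μ) :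
    ∫ ζ : Fin n → C,
        Matrix.det (Matrix.of fun i j => f i (ζ j)) *
          Matrix.det (Matrix.of fun i j => g i (ζ j))
        ∂(Measure.pi fun _ => μ)
      = (Nat.factorial n : ℂ) *
        Matrix.det (Matrix.of fun i j => ∫ z, f i z * g j z ∂μ) := by
  have integrable_prod (σ τ : Perm (Fin n)) :
      Integrable (fun ζ : Fin n → C => ∏ j, f (σ j) (ζ j) * g (τ j) (ζ j))
        (Measure.pi fun _ => μ) :=
    Integrable.fintype_prod fun j => hfg (σ j) (τ j)
  have factorial_mul_det := Matrix.sum_sum_sign_mul_prod_eq_factorial_mul_det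
    (Matrix.of fun i j => ∫ z, f i z * g j z ∂μ)
  rw [Fintype.card_fin] at factorial_mul_det
  simp only [← factorial_mul_det, Matrix.det_mul_det_eq_sum_sum_sign_mul_prod, Matrix.of_apply]
  rw [integral_finsetSum _ fun σ _ =>
    integrable_finsetSum _ fun τ _ => (integrable_prod σ τ).const_mul _]
  refine sum_congr rfl fun σ _ => ?_
  rw [integral_finsetSum _ fun τ _ => (integrable_prod σ τ).const_mul _]
  refine sum_congr rfl fun τ _ => ?_
  rw [integral_const_mul, integral_fintype_prod_eq_prod fun j z => f (σ j) z * g (τ j) z]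

/-- Andréief's identity: for measurable families `f_i, g_j : C → ℂ` with all
products `f_i · g_j` integrable,
`∫⋯∫ det(f_i(ζ_j)) det(g_i(ζ_j)) dμ(ζ_1)⋯dμ(ζ_n)
  = n! · det(∫ f_i g_j dμ)`. -/
theorem andreief_identity {C : Type*} [MeasurableSpace C] (μ : Measure C) [SigmaFinite μ]
    (n : ℕ) (f g : Fin n → C → ℂ)
    (hf : ∀ i, AEStronglyMeasurable (f i) μ)
    (hg : ∀ j, AEStronglyMeasurable (g j) μ)
    (hfg : ∀ i j, Integrable (fun ζ => f i ζ * g j ζ) μ) :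
    ∫ ζ : Fin n → C,
        Matrix.det (Matrix.of fun i j => f i (ζ j)) *
          Matrix.det (Matrix.of fun i j => g i (ζ j))
        ∂(Measure.pi fun _ => μ)
      = (Nat.factorial n : ℂ) *
        Matrix.det (Matrix.of fun i j => ∫ z, f i z * g j z ∂μ) :=
  andreief_identity_general μ n f g hfg
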